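/- arXiv:2507.12231 — 2 statements merged into one kernel-verified Lean document; each statement's English description precedes it below -/
import Mathlib

section
/- The function Q(u) = ((√(8u+1) − 1)/2)^(2p) for p > 3/2 is convex on [0,∞): its second derivative satisfies Q''(u) ≥ ((√(8u+1)−1)/2)^(2p−2) · (8p/(8u+1)) · (2p−2) ≥ 0 for all u ≥ 0. -/
/-!
Write `g = (√(8u+1) - 1)/2`, so that `√(8u+1) = 2g + 1` and `g' = 2/(2g+1)`. For `Q = g ^ r`
(here `r = 2p ≥ 2`) this gives `Q'' = 4r g^(r-2) ((r-2)(2g+1) + 1) / (2g+1)^3`; the bound is this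
formula with the nonnegative term `4r g^(r-2) / (2g+1)^3` dropped, and convexity follows from
`Q'' ≥ 0`.
-/

open Real Set Filter Topology

/-- The inverse of the triangular-number map `x ↦ x (x + 1) / 2` on `[0, ∞)`. -/
noncomputable def triangularRoot (u : ℝ) : ℝ := (√(8 * u + 1) - 1) / 2

lemma triangularRoot_nonneg {u : ℝ} (hu : 0 ≤ u) : 0 ≤ triangularRoot u := by
  have : 1 ≤ √(8 * u + 1) := one_le_sqrt.mpr (by linarith)
  unfold triangularRoot
  linarith

lemma two_mul_triangularRoot_add_one (u : ℝ) : 2 * triangularRoot u + 1 = √(8 * u + 1) := by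
  rw [triangularRoot]
  ring

lemma eight_mul_add_one_eq_sq {u : ℝ} (hu : -1/8 ≤ u) :
    8 * u + 1 = (2 * triangularRoot u + 1) ^ 2 := by
  rw [two_mul_triangularRoot_add_one, sq_sqrt (by linarith)]

lemma hasDerivAt_triangularRoot {u : ℝ} (hu : -1/8 < u) :
    HasDerivAt triangularRoot (2 / (2 * triangularRoot u + 1)) u := by
  have hpos : 0 < 8 * u + 1 := by linarith
  have hlin : HasDerivAt (fun u : ℝ => 8 * u + 1) 8 u := by
    simpa using ((hasDerivAt_id u).const_mul (8 : ℝ)).add_const (1 : ℝ)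
  have := (((hasDerivAt_sqrt hpos.ne').comp u hlin).sub_const 1).div_const 2
  refine this.congr_deriv ?_
  have hsqrt : 0 < √(8 * u + 1) := sqrt_pos.mpr hpos
  rw [two_mul_triangularRoot_add_one]
  field_simp
  ring

lemma hasDerivAt_triangularRoot_rpow {r u : ℝ} (hr : 1 ≤ r) (hu : -1/8 < u) :
    HasDerivAt (fun u => triangularRoot u ^ r)
      (2 * r * (triangularRoot u ^ (r - 1) / (2 * triangularRoot u + 1))) u := by
  convert (hasDerivAt_triangularRoot hu).rpow_const (Or.inr hr) using 1
  ring

lemma hasDerivAt_triangularRoot_rpow_div {r u : ℝ} (hr : 1 ≤ r) (hu : 0 ≤ u) :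
    HasDerivAt (fun u => triangularRoot u ^ r / (2 * triangularRoot u + 1))
      (2 * triangularRoot u ^ (r - 1) * ((r - 1) * (2 * triangularRoot u + 1) + 1) /
        (2 * triangularRoot u + 1) ^ 3) u := by
  have hg := triangularRoot_nonneg hu
  have hden : HasDerivAt (fun u => 2 * triangularRoot u + 1)
      (2 * (2 / (2 * triangularRoot u + 1))) u :=
    ((hasDerivAt_triangularRoot (by linarith)).const_mul 2).add_const 1
  refine ((hasDerivAt_triangularRoot_rpow hr (by linarith)).div hden (by positivity)).congr_deriv ?_
  have hpow : triangularRoot u ^ r = triangularRoot u ^ (r - 1) * triangularRoot u := by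
    rw [← rpow_add_one' hg (by linarith), sub_add_cancel]
  rw [hpow]
  field_simp
  ring

lemma hasDerivAt_deriv_triangularRoot_rpow {r u : ℝ} (hr : 2 ≤ r) (hu : 0 ≤ u) :
    HasDerivAt (deriv fun u => triangularRoot u ^ r)
      (4 * r * triangularRoot u ^ (r - 2) * ((r - 2) * (2 * triangularRoot u + 1) + 1) /
        (2 * triangularRoot u + 1) ^ 3) u := by
  have hderiv : (deriv fun u => triangularRoot u ^ r) =ᶠ[𝓝 u]
      fun u => 2 * r * (triangularRoot u ^ (r - 1) / (2 * triangularRoot u + 1)) := by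
    filter_upwards [Ioi_mem_nhds (show -1/8 < u by linarith)] with v hv
    exact (hasDerivAt_triangularRoot_rpow (by linarith) hv).deriv
  refine HasDerivAt.congr_of_eventuallyEq ?_ hderiv
  refine ((hasDerivAt_triangularRoot_rpow_div (r := r - 1) (by linarith) hu).const_mul
    (2 * r)).congr_deriv ?_
  rw [show r - 1 - 1 = r - 2 by ring]
  ring

lemma le_deriv_deriv_triangularRoot_rpow {r u : ℝ} (hr : 2 ≤ r) (hu : 0 ≤ u) :
    triangularRoot u ^ (r - 2) * (4 * r / (8 * u + 1)) * (r - 2) ≤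
      deriv (deriv fun u => triangularRoot u ^ r) u := by
  rw [(hasDerivAt_deriv_triangularRoot_rpow hr hu).deriv, eight_mul_add_one_eq_sq (by linarith)]
  have hg := triangularRoot_nonneg hu
  set g := triangularRoot u
  have hslack : 0 ≤ 4 * r * g ^ (r - 2) / (2 * g + 1) ^ 3 := by positivity
  calc g ^ (r - 2) * (4 * r / (2 * g + 1) ^ 2) * (r - 2)
      ≤ g ^ (r - 2) * (4 * r / (2 * g + 1) ^ 2) * (r - 2) +
          4 * r * g ^ (r - 2) / (2 * g + 1) ^ 3 := le_add_of_nonneg_right hslack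
    _ = _ := by field_simp

lemma convexOn_triangularRoot_rpow {r : ℝ} (hr : 2 ≤ r) :
    ConvexOn ℝ (Ici 0) fun u => triangularRoot u ^ r := by
  have hQ' : ∀ u ∈ Ici (0 : ℝ), HasDerivAt (fun u => triangularRoot u ^ r)
      (deriv (fun u => triangularRoot u ^ r) u) u := fun u hu =>
    (hasDerivAt_triangularRoot_rpow (by linarith) (by linarith [mem_Ici.mp hu])).differentiableAt
      |>.hasDerivAt
  refine convexOn_of_hasDerivWithinAt2_nonneg (convex_Ici 0)
    (fun u hu => (hQ' u hu).continuousAt.continuousWithinAt)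
    (fun u hu => (hQ' u (interior_subset hu)).hasDerivWithinAt)
    (fun u hu => (hasDerivAt_deriv_triangularRoot_rpow hr (interior_subset hu)).hasDerivWithinAt)
    fun u hu => ?_
  have hg := triangularRoot_nonneg (interior_subset hu : u ∈ Ici 0)
  have : 0 ≤ r - 2 := by linarith
  positivity

theorem stmt_5 (p : ℝ) (hp : 3/2 < p) :
    ConvexOn ℝ (Set.Ici 0)
      (fun u : ℝ => ((Real.sqrt (8*u+1) - 1)/2) ^ (2*p)) ∧
    ∀ u ≥ (0:ℝ),
      0 ≤ ((Real.sqrt (8*u+1) - 1)/2) ^ (2*p - 2) * (8*p/(8*u+1)) * (2*p - 2) ∧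
      ((Real.sqrt (8*u+1) - 1)/2) ^ (2*p - 2) * (8*p/(8*u+1)) * (2*p - 2) ≤
        deriv (deriv (fun u : ℝ => ((Real.sqrt (8*u+1) - 1)/2) ^ (2*p))) u := by
  have hr : 2 ≤ 2 * p := by linarith
  refine ⟨convexOn_triangularRoot_rpow hr, fun u hu => ⟨?_, ?_⟩⟩
  · have hg := triangularRoot_nonneg hu
    have : 0 ≤ 2 * p - 2 := by linarith
    exact mul_nonneg (mul_nonneg (rpow_nonneg hg _) (by positivity)) this
  · have h := le_deriv_deriv_triangularRoot_rpow hr hu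
    rwa [show 4 * (2 * p) = 8 * p by ring] at h
end

section
/- Under conditions on K (positive, even, kernel with ∫₀^∞ K = 1/2, decreasing on ℝ⁺), if B* is a bounded measurable function on ℝ⁺ with inf_{t>r} B*(t) > 0 for some r > 0, and Q(B*(x)) = ∫₀^∞ (K(x−t) − K(x+t))(B*(t) + ω₂(t,B*(t))) dt with Q(0) = 0, Q strictly increasing, and ω₂ ≥ 0, then B*(x) > 0 for all x > 0. -/
open MeasureTheory Set
open scoped ENNReal

/-!
For `x > r` we have `B x ≥ c > 0`, so `Q (B x) > 0`; the Bochner integral on the right is then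
nonzero, so its integrand is integrable. To reach `0 < x ≤ r`, pass to the lower integral
`L x = ∫⁻_{t > 0} (K (x - t) - K (x + t)) (B t + ω₂ t (B t)) dt`. Uniformly in `t > 0`,
`∫ₐᵇ (K (x - t) - K (x + t)) dx ≤ C ∫ᵣ^{r+1} (K (s - t) - K (s + t)) ds`, so by Tonelli `L`
has finite integral over every `(a, b] ⊆ (0, r]`. Since `L` is lower semicontinuous (Fatou) and
`L x = Q (B x) ≤ Q (sup B)` wherever it is finite, `L` is finite everywhere. So at every `x > 0`
the equation involves a genuine integral of a nonnegative function that is positive for `t > r`,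
whence `Q (B x) > 0` and `B x > 0`.
-/

def reflKernel (K : ℝ → ℝ) (x t : ℝ) : ℝ := K (x - t) - K (x + t)

section Kernel

variable {K : ℝ → ℝ}

lemma apply_eq_apply_abs (heven : ∀ t, K (-t) = K t) (u : ℝ) : K u = K |u| := by
  rcases abs_cases u with ⟨h, _⟩ | ⟨h, _⟩ <;> rw [h]
  rw [heven]

lemma apply_le_apply_of_abs_le (heven : ∀ t, K (-t) = K t) (hanti : StrictAntiOn K (Ici 0))
    {u v : ℝ} (huv : |u| ≤ |v|) : K v ≤ K u := by
  rw [apply_eq_apply_abs heven u, apply_eq_apply_abs heven v]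
  exact hanti.antitoneOn (abs_nonneg u) (abs_nonneg v) huv

lemma apply_le_apply_zero (heven : ∀ t, K (-t) = K t) (hanti : StrictAntiOn K (Ici 0))
    (u : ℝ) : K u ≤ K 0 :=
  (apply_eq_apply_abs heven u).trans_le (apply_le_apply_of_abs_le heven hanti (by simp))

lemma reflKernel_pos (heven : ∀ t, K (-t) = K t) (hanti : StrictAntiOn K (Ici 0))
    {x t : ℝ} (hx : 0 < x) (ht : 0 < t) : 0 < reflKernel K x t := by
  have hlt : |x - t| < x + t := abs_lt.2 ⟨by linarith, by linarith⟩
  rw [reflKernel, apply_eq_apply_abs heven (x - t), sub_pos]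
  exact hanti (mem_Ici.2 (abs_nonneg _)) (mem_Ici.2 (by linarith)) hlt

lemma reflKernel_le_reflKernel (heven : ∀ t, K (-t) = K t) (hanti : StrictAntiOn K (Ici 0))
    {x s t : ℝ} (hx : 0 ≤ x) (hxs : x ≤ s) (hst : s ≤ t) :
    reflKernel K x t ≤ reflKernel K s t := by
  have h₁ : K (x - t) ≤ K (s - t) :=
    apply_le_apply_of_abs_le heven hanti
      (by rw [abs_of_nonpos (by linarith), abs_of_nonpos (by linarith)]; linarith)
  have h₂ : K (s + t) ≤ K (x + t) :=
    apply_le_apply_of_abs_le heven hanti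
      (by rw [abs_of_nonneg (by linarith), abs_of_nonneg (by linarith)]; linarith)
  simp only [reflKernel]
  linarith

lemma continuous_reflKernel (hcont : Continuous K) :
    Continuous fun p : ℝ × ℝ => reflKernel K p.1 p.2 := by
  unfold reflKernel; fun_prop

lemma continuous_reflKernel_left (hcont : Continuous K) (t : ℝ) :
    Continuous fun x => reflKernel K x t := by
  unfold reflKernel; fun_prop

lemma continuous_reflKernel_right (hcont : Continuous K) (x : ℝ) :
    Continuous fun t => reflKernel K x t := by
  unfold reflKernel; fun_prop

lemma intervalIntegral_reflKernel (hcont : Continuous K) (a b t : ℝ) :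
    ∫ x in a..b, reflKernel K x t =
      (∫ u in (a - t)..(a + t), K u) - ∫ u in (b - t)..(b + t), K u := by
  simp only [reflKernel]
  rw [intervalIntegral.integral_sub
      ((by fun_prop : Continuous fun x => K (x - t)).intervalIntegrable _ _)
      ((by fun_prop : Continuous fun x => K (x + t)).intervalIntegrable _ _),
    intervalIntegral.integral_comp_sub_right K t, intervalIntegral.integral_comp_add_right K t]
  exact intervalIntegral.integral_interval_sub_interval_comm (hcont.intervalIntegrable _ _)
    (hcont.intervalIntegrable _ _) (hcont.intervalIntegrable _ _)

lemma intervalIntegral_le_mul_of_le {f : ℝ → ℝ} (hf : Continuous f) {p q m : ℝ}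
    (hpq : p ≤ q) (hm : ∀ u ∈ Icc p q, f u ≤ m) : ∫ u in p..q, f u ≤ (q - p) * m := by
  simpa using intervalIntegral.integral_mono_on (μ := volume) hpq (hf.intervalIntegrable _ _)
    intervalIntegrable_const hm

lemma mul_le_intervalIntegral_of_le {f : ℝ → ℝ} (hf : Continuous f) {p q m : ℝ}
    (hpq : p ≤ q) (hm : ∀ u ∈ Icc p q, m ≤ f u) : (q - p) * m ≤ ∫ u in p..q, f u := by
  simpa using intervalIntegral.integral_mono_on (μ := volume) hpq intervalIntegrable_const
    (hf.intervalIntegrable _ _) hm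

lemma intervalIntegral_reflKernel_le_two_mul (hpos : ∀ x, 0 < K x) (heven : ∀ t, K (-t) = K t)
    (hanti : StrictAntiOn K (Ici 0)) (hcont : Continuous K) (a b : ℝ) {t : ℝ} (ht : 0 ≤ t) :
    ∫ x in a..b, reflKernel K x t ≤ 2 * t * K 0 := by
  have h₁ := intervalIntegral_le_mul_of_le hcont (by linarith : a - t ≤ a + t)
    fun u _ => apply_le_apply_zero heven hanti u
  have h₂ : 0 ≤ ∫ u in (b - t)..(b + t), K u :=
    intervalIntegral.integral_nonneg (by linarith) fun u _ => (hpos u).le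
  rw [intervalIntegral_reflKernel hcont]
  linarith

lemma intervalIntegral_reflKernel_le_mul (hpos : ∀ x, 0 < K x) (heven : ∀ t, K (-t) = K t)
    (hanti : StrictAntiOn K (Ici 0)) (hcont : Continuous K) {a b : ℝ} (hab : a ≤ b) (t : ℝ) :
    ∫ x in a..b, reflKernel K x t ≤ (b - a) * K 0 :=
  intervalIntegral_le_mul_of_le (continuous_reflKernel_left hcont t) hab fun x _ => by
    simp only [reflKernel]
    linarith [hpos (x + t), apply_le_apply_zero heven hanti (x - t)]

lemma two_mul_le_intervalIntegral_reflKernel (heven : ∀ t, K (-t) = K t)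
    (hanti : StrictAntiOn K (Ici 0)) (hcont : Continuous K) {r t : ℝ} (hr : 0 ≤ r)
    (ht : 0 ≤ t) (htr : t ≤ r + 1) :
    2 * t * (K (r + t) - K (r + 1 - t)) ≤ ∫ s in r..(r + 1), reflKernel K s t := by
  have h₁ := mul_le_intervalIntegral_of_le hcont (by linarith : r - t ≤ r + t)
    fun u hu => apply_le_apply_of_abs_le heven hanti
      (by rw [abs_of_nonneg (by linarith : 0 ≤ r + t)]
          exact abs_le.2 ⟨by linarith [hu.1], hu.2⟩)
  have h₂ := intervalIntegral_le_mul_of_le hcont (by linarith : r + 1 - t ≤ r + 1 + t)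
    fun u hu => apply_le_apply_of_abs_le heven hanti
      (by rw [abs_of_nonneg (by linarith : 0 ≤ r + 1 - t), abs_of_nonneg (by linarith [hu.1])]
          exact hu.1)
  rw [intervalIntegral_reflKernel hcont]
  linarith

lemma exists_pos_le_intervalIntegral_reflKernel (heven : ∀ t, K (-t) = K t)
    (hanti : StrictAntiOn K (Ici 0)) (hcont : Continuous K) {r δ T : ℝ} (hr : 0 < r)
    (hδ : 0 < δ) (hδT : δ ≤ T) :
    ∃ ε > 0, ∀ t ∈ Icc δ T, ε ≤ ∫ s in r..(r + 1), reflKernel K s t := by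
  obtain ⟨p, hp, hmin⟩ := (isCompact_Icc.prod isCompact_Icc).exists_isMinOn
    (⟨(r, δ), ⟨⟨le_rfl, by linarith⟩, ⟨le_rfl, hδT⟩⟩⟩ : (Icc r (r + 1) ×ˢ Icc δ T).Nonempty)
    (continuous_reflKernel hcont).continuousOn
  refine ⟨reflKernel K p.1 p.2,
    reflKernel_pos heven hanti (by linarith [hp.1.1]) (by linarith [hp.2.1]), fun t ht => ?_⟩
  simpa using mul_le_intervalIntegral_of_le (continuous_reflKernel_left hcont t)
    (p := r) (q := r + 1) (by linarith) fun s hs =>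
      hmin (show (s, t) ∈ Icc r (r + 1) ×ˢ Icc δ T from ⟨hs, ht⟩)

lemma intervalIntegral_reflKernel_le_mul_of_le (heven : ∀ t, K (-t) = K t)
    (hanti : StrictAntiOn K (Ici 0)) (hcont : Continuous K) {a b r t : ℝ} (ha : 0 ≤ a)
    (hab : a ≤ b) (hbr : b ≤ r) (ht : r + 1 ≤ t) :
    ∫ x in a..b, reflKernel K x t ≤ (b - a) * ∫ s in r..(r + 1), reflKernel K s t :=
  intervalIntegral_le_mul_of_le (continuous_reflKernel_left hcont t) hab fun x hx => by
    simpa using mul_le_intervalIntegral_of_le (continuous_reflKernel_left hcont t)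
      (p := r) (q := r + 1) (by linarith) fun s hs => reflKernel_le_reflKernel heven hanti
        (by linarith [hx.1]) (by linarith [hx.2, hs.1]) (by linarith [hs.2])

/-- For small `t` both sides are `O(t)`, for moderate `t` the right side is bounded below by
compactness, and for `t ≥ r + 1` the kernel is monotone in `x` on `[0, r + 1]`. -/
lemma exists_intervalIntegral_reflKernel_le_mul (hpos : ∀ x, 0 < K x)
    (heven : ∀ t, K (-t) = K t) (hanti : StrictAntiOn K (Ici 0)) (hcont : Continuous K)
    {a b r : ℝ} (ha : 0 ≤ a) (hab : a ≤ b) (hbr : b ≤ r) (hr : 0 < r) :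
    ∃ C, ∀ t > 0, ∫ x in a..b, reflKernel K x t ≤ C * ∫ s in r..(r + 1), reflKernel K s t := by
  set κ := K (r + 1 / 4) - K (r + 3 / 4)
  have hκ : 0 < κ := sub_pos.2 <| hanti (mem_Ici.2 (by linarith)) (mem_Ici.2 (by linarith))
    (by linarith)
  obtain ⟨ε, hε, hJε⟩ := exists_pos_le_intervalIntegral_reflKernel heven hanti hcont hr
    (by norm_num : (0 : ℝ) < 1 / 4) (by linarith : 1 / 4 ≤ r + 1)
  have hK0 := (hpos 0).le
  refine ⟨K 0 / κ + (b - a) * K 0 / ε + (b - a), fun t ht => ?_⟩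
  have hJ : 0 ≤ ∫ s in r..(r + 1), reflKernel K s t := intervalIntegral.integral_nonneg
    (by linarith) fun s hs => (reflKernel_pos heven hanti (by linarith [hs.1]) ht).le
  have enlarge : ∀ C' ≤ K 0 / κ + (b - a) * K 0 / ε + (b - a),
      ∫ x in a..b, reflKernel K x t ≤ C' * ∫ s in r..(r + 1), reflKernel K s t →
      ∫ x in a..b, reflKernel K x t ≤
        (K 0 / κ + (b - a) * K 0 / ε + (b - a)) * ∫ s in r..(r + 1), reflKernel K s t :=
    fun C' hC' h => h.trans (mul_le_mul_of_nonneg_right hC' hJ)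
  have hba : 0 ≤ b - a := by linarith
  rcases le_or_gt t (1 / 4) with hsmall | hmid
  · refine enlarge (K 0 / κ) (by linarith [show 0 ≤ (b - a) * K 0 / ε by positivity]) ?_
    have hJ' := two_mul_le_intervalIntegral_reflKernel heven hanti hcont hr.le ht.le
      (by linarith : t ≤ r + 1)
    have h₁ : K (r + 1 / 4) ≤ K (r + t) := hanti.antitoneOn (mem_Ici.2 (by linarith))
      (mem_Ici.2 (by linarith)) (by linarith)
    have h₂ : K (r + 1 - t) ≤ K (r + 3 / 4) := hanti.antitoneOn (mem_Ici.2 (by linarith))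
      (mem_Ici.2 (by linarith)) (by linarith)
    calc ∫ x in a..b, reflKernel K x t ≤ 2 * t * K 0 :=
          intervalIntegral_reflKernel_le_two_mul hpos heven hanti hcont a b ht.le
      _ = K 0 / κ * (2 * t * κ) := by field_simp
      _ ≤ K 0 / κ * ∫ s in r..(r + 1), reflKernel K s t := by
          gcongr
          exact hJ'.trans' (by gcongr; linarith)
  rcases le_or_gt t (r + 1) with hmid' | hlarge
  · refine enlarge ((b - a) * K 0 / ε) (by linarith [show 0 ≤ K 0 / κ by positivity]) ?_
    calc ∫ x in a..b, reflKernel K x t ≤ (b - a) * K 0 :=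
          intervalIntegral_reflKernel_le_mul hpos heven hanti hcont hab t
      _ = (b - a) * K 0 / ε * ε := by field_simp
      _ ≤ (b - a) * K 0 / ε * ∫ s in r..(r + 1), reflKernel K s t := by
          gcongr
          exact hJε t ⟨hmid.le, hmid'⟩
  · refine enlarge (b - a)
      (by linarith [show 0 ≤ K 0 / κ + (b - a) * K 0 / ε by positivity]) ?_
    exact intervalIntegral_reflKernel_le_mul_of_le heven hanti hcont ha hab hbr hlarge.le

lemma exists_lintegral_reflKernel_le_mul (hpos : ∀ x, 0 < K x)
    (heven : ∀ t, K (-t) = K t) (hanti : StrictAntiOn K (Ici 0)) (hcont : Continuous K)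
    {a b r : ℝ} (ha : 0 ≤ a) (hab : a ≤ b) (hbr : b ≤ r) (hr : 0 < r) :
    ∃ C ≠ ⊤, ∀ t > 0, ∫⁻ x in Ioc a b, ENNReal.ofReal (reflKernel K x t) ≤
      C * ∫⁻ s in Ioc r (r + 1), ENNReal.ofReal (reflKernel K s t) := by
  obtain ⟨C, hC⟩ :=
    exists_intervalIntegral_reflKernel_le_mul hpos heven hanti hcont ha hab hbr hr
  have hlin : ∀ {p q t : ℝ}, 0 ≤ p → p ≤ q → 0 < t →
      ∫⁻ x in Ioc p q, ENNReal.ofReal (reflKernel K x t) =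
        ENNReal.ofReal (∫ x in p..q, reflKernel K x t) := fun hp hpq ht => by
    rw [intervalIntegral.integral_of_le hpq, ofReal_integral_eq_lintegral_ofReal
      ((continuous_reflKernel_left hcont _).integrableOn_Icc.mono_set Ioc_subset_Icc_self)
      ((ae_restrict_iff' measurableSet_Ioc).2 (ae_of_all _ fun x hx =>
        (reflKernel_pos heven hanti (hp.trans_lt hx.1) ht).le))]
  refine ⟨ENNReal.ofReal C, ENNReal.ofReal_ne_top, fun t ht => ?_⟩
  have hJ : 0 ≤ ∫ s in r..(r + 1), reflKernel K s t := intervalIntegral.integral_nonneg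
    (by linarith) fun s hs => (reflKernel_pos heven hanti (by linarith [hs.1]) ht).le
  rw [hlin ha hab ht, hlin hr.le (by linarith) ht, ← ENNReal.ofReal_mul' hJ]
  exact ENNReal.ofReal_le_ofReal (hC t ht)

end Kernel

lemma lowerSemicontinuous_lintegral {X α : Type*} [TopologicalSpace X] [FirstCountableTopology X]
    [MeasurableSpace α] {μ : Measure α} {F : X → α → ℝ≥0∞}
    (hF : ∀ a, LowerSemicontinuous fun x => F x a) (hFm : ∀ x, AEMeasurable (F x) μ) :
    LowerSemicontinuous fun x => ∫⁻ a, F x a ∂μ :=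
  lowerSemicontinuous_iff_le_liminf.2 fun x =>
    (lintegral_mono fun a => (hF a).le_liminf x).trans (lintegral_liminf_le' hFm)

/-- The right-hand side of the integral equation as a lower Lebesgue integral, which, unlike the
Bochner integral, does not silently vanish on non-integrable integrands. -/
noncomputable def reflIntegral (K h : ℝ → ℝ) (x : ℝ) : ℝ≥0∞ :=
  ∫⁻ t in Ioi 0, ENNReal.ofReal (reflKernel K x t * h t)

section Integral

variable {K h : ℝ → ℝ}

lemma lowerSemicontinuous_reflIntegral (hcont : Continuous K)
    (hh : AEMeasurable h (volume.restrict (Ioi 0))) : LowerSemicontinuous (reflIntegral K h) :=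
  lowerSemicontinuous_lintegral
    (fun t => (ENNReal.continuous_ofReal.comp
      ((continuous_reflKernel_left hcont t).mul continuous_const)).lowerSemicontinuous)
    fun x => ENNReal.measurable_ofReal.comp_aemeasurable
      ((continuous_reflKernel_right hcont x).measurable.aemeasurable.mul hh)

lemma exists_setLIntegral_reflIntegral_le_mul (hpos : ∀ x, 0 < K x)
    (heven : ∀ t, K (-t) = K t) (hanti : StrictAntiOn K (Ici 0)) (hcont : Continuous K)
    (hh : AEMeasurable h (volume.restrict (Ioi 0))) {a b r : ℝ} (ha : 0 ≤ a) (hab : a ≤ b)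
    (hbr : b ≤ r) (hr : 0 < r) :
    ∃ C ≠ ⊤, ∫⁻ x in Ioc a b, reflIntegral K h x ≤
      C * ∫⁻ s in Ioc r (r + 1), reflIntegral K h s := by
  obtain ⟨C, hC, hker⟩ := exists_lintegral_reflKernel_le_mul hpos heven hanti hcont ha hab hbr hr
  have swap : ∀ p q : ℝ, ∫⁻ x in Ioc p q, reflIntegral K h x =
      ∫⁻ t in Ioi 0, ∫⁻ x in Ioc p q, ENNReal.ofReal (reflKernel K x t * h t) := fun p q =>
    lintegral_lintegral_swap (ENNReal.measurable_ofReal.comp_aemeasurable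
      ((continuous_reflKernel hcont).measurable.aemeasurable.mul hh.comp_snd))
  have split : ∀ {p q t : ℝ}, 0 ≤ p → 0 < t →
      ∫⁻ x in Ioc p q, ENNReal.ofReal (reflKernel K x t * h t) =
        (∫⁻ x in Ioc p q, ENNReal.ofReal (reflKernel K x t)) * ENNReal.ofReal (h t) := by
    intro p q t hp ht
    rw [← lintegral_mul_const' _ _ ENNReal.ofReal_ne_top]
    exact setLIntegral_congr_fun measurableSet_Ioc fun x hx =>
      ENNReal.ofReal_mul (reflKernel_pos heven hanti (hp.trans_lt hx.1) ht).le
  refine ⟨C, hC, ?_⟩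
  rw [swap, swap, ← lintegral_const_mul' _ _ hC]
  refine setLIntegral_mono' measurableSet_Ioi fun t ht => ?_
  rw [split ha ht, split hr.le ht, ← mul_assoc]
  exact mul_le_mul_left (hker t ht) _

/-- If `reflIntegral K h x₀ > M`, lower semicontinuity gives an interval `(a, x₀]` on which it
exceeds `M`, hence is infinite, while its integral over `(a, x₀]` is finite. -/
lemma reflIntegral_le_of_ne_top_imp_le (hpos : ∀ x, 0 < K x)
    (heven : ∀ t, K (-t) = K t) (hanti : StrictAntiOn K (Ici 0)) (hcont : Continuous K)
    (hh : AEMeasurable h (volume.restrict (Ioi 0))) {r : ℝ} (hr : 0 < r) {M : ℝ≥0∞}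
    (hM : M ≠ ⊤) (hle : ∀ x > 0, reflIntegral K h x ≠ ⊤ → reflIntegral K h x ≤ M)
    (hfar : ∀ x > r, reflIntegral K h x ≠ ⊤) {x₀ : ℝ} (hx₀ : 0 < x₀) :
    reflIntegral K h x₀ ≤ M := by
  by_contra! hgt
  have hx₀r : x₀ ≤ r := not_lt.1 fun h => (hle x₀ hx₀ (hfar x₀ h)).not_gt hgt
  obtain ⟨l, u, ⟨hl, hu⟩, hsub⟩ := mem_nhds_iff_exists_Ioo_subset.1
    (((lowerSemicontinuous_reflIntegral hcont hh).isOpen_preimage M).mem_nhds hgt)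
  set a := max l (x₀ / 2)
  have ha : 0 < a := lt_max_of_lt_right (by linarith)
  have hax : a < x₀ := max_lt hl (by linarith)
  have htop : ∀ x ∈ Ioc a x₀, reflIntegral K h x = ⊤ := fun x hx => by
    by_contra hne
    exact (hle x (ha.trans hx.1) hne).not_gt
      (hsub ⟨(le_max_left _ _).trans_lt hx.1, hx.2.trans_lt hu⟩)
  obtain ⟨C, hC, hbound⟩ := exists_setLIntegral_reflIntegral_le_mul hpos heven hanti hcont hh
    ha.le hax.le hx₀r hr
  have hleft : ∫⁻ x in Ioc a x₀, reflIntegral K h x = ⊤ := by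
    rw [setLIntegral_congr_fun measurableSet_Ioc htop, setLIntegral_const, Real.volume_Ioc,
      ENNReal.top_mul (ENNReal.ofReal_pos.2 (sub_pos.2 hax)).ne']
  have hright : ∫⁻ s in Ioc r (r + 1), reflIntegral K h s ≤ M := by
    calc ∫⁻ s in Ioc r (r + 1), reflIntegral K h s ≤ ∫⁻ _ in Ioc r (r + 1), M :=
          setLIntegral_mono' measurableSet_Ioc fun s hs =>
            hle s (hr.trans hs.1) (hfar s hs.1)
      _ = M := by simp [Real.volume_Ioc]
  exact ENNReal.mul_ne_top hC hM
    (top_le_iff.1 (hleft ▸ hbound.trans (mul_le_mul_right hright C)))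

lemma reflKernel_mul_nonneg_ae (heven : ∀ t, K (-t) = K t) (hanti : StrictAntiOn K (Ici 0))
    (hh0 : ∀ t > 0, 0 ≤ h t) {x : ℝ} (hx : 0 < x) :
    0 ≤ᵐ[volume.restrict (Ioi 0)] fun t => reflKernel K x t * h t :=
  (ae_restrict_iff' measurableSet_Ioi).2 <| ae_of_all _ fun t ht =>
    mul_nonneg (reflKernel_pos heven hanti hx ht).le (hh0 t ht)

lemma integrable_iff_reflIntegral_ne_top (heven : ∀ t, K (-t) = K t)
    (hanti : StrictAntiOn K (Ici 0)) (hcont : Continuous K)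
    (hh : AEMeasurable h (volume.restrict (Ioi 0))) (hh0 : ∀ t > 0, 0 ≤ h t) {x : ℝ}
    (hx : 0 < x) :
    Integrable (fun t => reflKernel K x t * h t) (volume.restrict (Ioi 0)) ↔
      reflIntegral K h x ≠ ⊤ :=
  (lintegral_ofReal_ne_top_iff_integrable
    ((continuous_reflKernel_right hcont x).measurable.aemeasurable.mul hh).aestronglyMeasurable
    (reflKernel_mul_nonneg_ae heven hanti hh0 hx)).symm

lemma reflIntegral_eq_ofReal_integral (heven : ∀ t, K (-t) = K t)
    (hanti : StrictAntiOn K (Ici 0)) (hh0 : ∀ t > 0, 0 ≤ h t) {x : ℝ} (hx : 0 < x)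
    (hint : Integrable (fun t => reflKernel K x t * h t) (volume.restrict (Ioi 0))) :
    reflIntegral K h x = ENNReal.ofReal (∫ t in Ioi 0, reflKernel K x t * h t) :=
  (ofReal_integral_eq_lintegral_ofReal hint (reflKernel_mul_nonneg_ae heven hanti hh0 hx)).symm

lemma aemeasurable_of_integrable_reflKernel_mul (heven : ∀ t, K (-t) = K t)
    (hanti : StrictAntiOn K (Ici 0)) (hcont : Continuous K) {x : ℝ} (hx : 0 < x)
    (hint : Integrable (fun t => reflKernel K x t * h t) (volume.restrict (Ioi 0))) :
    AEMeasurable h (volume.restrict (Ioi 0)) :=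
  (hint.aemeasurable.div (continuous_reflKernel_right hcont x).measurable.aemeasurable).congr <|
    (ae_restrict_iff' measurableSet_Ioi).2 <| ae_of_all _ fun _ ht =>
      mul_div_cancel_left₀ _ (reflKernel_pos heven hanti hx ht).ne'

lemma integral_reflKernel_mul_pos (heven : ∀ t, K (-t) = K t)
    (hanti : StrictAntiOn K (Ici 0)) (hh0 : ∀ t > 0, 0 ≤ h t) {r : ℝ}
    (hfar : ∀ t > r, 0 < h t) {x : ℝ} (hx : 0 < x)
    (hint : Integrable (fun t => reflKernel K x t * h t) (volume.restrict (Ioi 0))) :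
    0 < ∫ t in Ioi 0, reflKernel K x t * h t := by
  have hsupp : Ioi (max r 0) ⊆ Function.support (fun t => reflKernel K x t * h t) ∩ Ioi 0 :=
    fun t ht => ⟨(mul_pos (reflKernel_pos heven hanti hx (le_max_right r 0 |>.trans_lt ht))
      (hfar t (le_max_left r 0 |>.trans_lt ht))).ne', le_max_right r 0 |>.trans_lt ht⟩
  rw [setIntegral_pos_iff_support_of_nonneg_ae (reflKernel_mul_nonneg_ae heven hanti hh0 hx)
    hint]
  exact (by simp : (0 : ℝ≥0∞) < volume (Ioi (max r 0))).trans_le (measure_mono hsupp)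

end Integral

theorem stmt_15_general (K : ℝ → ℝ)
    (hpos : ∀ x, 0 < K x)
    (heven : ∀ t, K (-t) = K t)
    (hcont : Continuous K)
    (hanti : StrictAntiOn K (Set.Ici 0))
    (Q : ℝ → ℝ) (hQ0 : Q 0 = 0) (hQmono : StrictMonoOn Q (Set.Ici 0))
    (ω₂ : ℝ → ℝ → ℝ) (hω : ∀ t ≥ (0:ℝ), ∀ u ≥ (0:ℝ), 0 ≤ ω₂ t u)
    (B : ℝ → ℝ) (hBnn : ∀ x ≥ (0:ℝ), 0 ≤ B x)
    (hBbd : ∃ C, ∀ x ≥ (0:ℝ), B x ≤ C)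
    (r : ℝ) (hr : 0 < r)
    (hinf : ∃ c > (0:ℝ), ∀ t > r, c ≤ B t)
    (heq : ∀ x ≥ (0:ℝ),
      Q (B x) = ∫ t in Set.Ioi (0:ℝ),
        (K (x - t) - K (x + t)) * (B t + ω₂ t (B t))) :
    ∀ x > (0:ℝ), 0 < B x := by
  obtain ⟨c, hc, hcB⟩ := hinf
  obtain ⟨C, hC⟩ := hBbd
  set h : ℝ → ℝ := fun t => B t + ω₂ t (B t)
  have heq' : ∀ x ≥ 0, Q (B x) = ∫ t in Ioi 0, reflKernel K x t * h t := heq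
  have hh0 : ∀ t > 0, 0 ≤ h t := fun t ht =>
    add_nonneg (hBnn t ht.le) (hω t ht.le _ (hBnn t ht.le))
  have hfar : ∀ t > r, 0 < h t := fun t ht =>
    add_pos_of_pos_of_nonneg (hc.trans_le (hcB t ht))
      (hω t (by linarith) _ (hBnn t (by linarith)))
  have hQ_far : ∀ x > r, 0 < Q (B x) := fun x hx => by
    have hBx := hc.trans_le (hcB x hx)
    exact hQ0 ▸ hQmono (mem_Ici.2 le_rfl) (mem_Ici.2 hBx.le) hBx
  have hint_far : ∀ x > r, Integrable (fun t => reflKernel K x t * h t) (volume.restrict (Ioi 0)) :=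
    fun x hx => .of_integral_ne_zero (heq' x (by linarith) ▸ (hQ_far x hx).ne')
  have hh := aemeasurable_of_integrable_reflKernel_mul heven hanti hcont
    (by linarith : 0 < r + 1) (hint_far (r + 1) (by linarith))
  have hiff := fun {x : ℝ} (hx : 0 < x) =>
    integrable_iff_reflIntegral_ne_top heven hanti hcont hh hh0 hx
  have hle : ∀ x > 0, reflIntegral K h x ≠ ⊤ → reflIntegral K h x ≤ ENNReal.ofReal (Q C) := by
    intro x hx hfin
    rw [reflIntegral_eq_ofReal_integral heven hanti hh0 hx ((hiff hx).2 hfin), ← heq' x hx.le]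
    exact ENNReal.ofReal_le_ofReal (hQmono.monotoneOn (hBnn x hx.le)
      ((hBnn 0 le_rfl).trans (hC 0 le_rfl)) (hC x hx.le))
  intro x hx
  have hint := (hiff hx).2 <| ne_top_of_le_ne_top ENNReal.ofReal_ne_top <|
    reflIntegral_le_of_ne_top_imp_le hpos heven hanti hcont hh hr ENNReal.ofReal_ne_top hle
      (fun y hy => (hiff (hr.trans hy)).1 (hint_far y hy)) hx
  have hQ : 0 < Q (B x) :=
    heq' x hx.le ▸ integral_reflKernel_mul_pos heven hanti hh0 hfar hx hint
  exact (hBnn x hx.le).lt_of_ne fun h0 => hQ.ne' (h0 ▸ hQ0)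

theorem stmt_15 (K : ℝ → ℝ)
    (hpos : ∀ x, 0 < K x)
    (heven : ∀ t, K (-t) = K t)
    (hcont : Continuous K)
    (hanti : StrictAntiOn K (Set.Ici 0))
    (hKint : Integrable K)
    (hhalf : ∫ t in Set.Ioi (0:ℝ), K t = 1/2)
    (Q : ℝ → ℝ) (hQ0 : Q 0 = 0) (hQmono : StrictMonoOn Q (Set.Ici 0))
    (ω₂ : ℝ → ℝ → ℝ) (hω : ∀ t ≥ (0:ℝ), ∀ u ≥ (0:ℝ), 0 ≤ ω₂ t u)
    (B : ℝ → ℝ) (hBnn : ∀ x ≥ (0:ℝ), 0 ≤ B x)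
    (hBbd : ∃ C, ∀ x ≥ (0:ℝ), B x ≤ C)
    (r : ℝ) (hr : 0 < r)
    (hinf : ∃ c > (0:ℝ), ∀ t > r, c ≤ B t)
    (heq : ∀ x ≥ (0:ℝ),
      Q (B x) = ∫ t in Set.Ioi (0:ℝ),
        (K (x - t) - K (x + t)) * (B t + ω₂ t (B t))) :
    ∀ x > (0:ℝ), 0 < B x :=
  stmt_15_general K hpos heven hcont hanti Q hQ0 hQmono ω₂ hω B hBnn hBbd r hr hinf heq
end
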